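/- Let P ≻ 0, R ≻ 0, C a p×n matrix, K = P Cᵀ (C P Cᵀ + R)⁻¹, and P⁺ = P − K C P. Then Kᵀ (P⁺)⁻¹ K = R⁻¹ C P⁺ Cᵀ R⁻¹. -/

import Mathlib

/-!
Write `S = C P Cᵀ + R` and `P⁺ = P - K C P`. Since `C P Cᵀ = S - R`, expanding `P⁺ Cᵀ R⁻¹` gives
back the gain: `K = P⁺ Cᵀ R⁻¹`. By the Woodbury identity `P⁺ = (P⁻¹ + Cᵀ R⁻¹ C)⁻¹`, so `P⁺` is
positive definite, in particular symmetric and invertible. Hence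
`Kᵀ (P⁺)⁻¹ K = R⁻¹ C P⁺ (P⁺)⁻¹ P⁺ Cᵀ R⁻¹ = R⁻¹ C P⁺ Cᵀ R⁻¹`.
-/

open Matrix

namespace Matrix

variable {m n : Type*} [Fintype m] [Fintype n] [DecidableEq m]

theorem mul_mul_inv_add_eq_sub_mul_mul_inv {α : Type*} [CommRing α] (P : Matrix n n α)
    (U : Matrix n m α) (V : Matrix m n α) {R : Matrix m m α} (hR : IsUnit R)
    (hS : IsUnit (V * P * U + R)) :
    P * U * (V * P * U + R)⁻¹ = (P - P * U * (V * P * U + R)⁻¹ * V * P) * U * R⁻¹ := by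
  set S := V * P * U + R
  have hSR : S⁻¹ * R = 1 - S⁻¹ * (V * P * U) := eq_sub_of_add_eq' <| by
    rw [← Matrix.mul_add, nonsing_inv_mul _ ((isUnit_iff_isUnit_det _).mp hS)]
  calc P * U * S⁻¹
      = P * U * (S⁻¹ * R) * R⁻¹ := by
        rw [Matrix.mul_assoc _ (S⁻¹ * R), Matrix.mul_assoc S⁻¹,
          mul_nonsing_inv _ ((isUnit_iff_isUnit_det _).mp hR), Matrix.mul_one]
    _ = (P - P * U * S⁻¹ * V * P) * U * R⁻¹ := by
        rw [hSR]; simp only [Matrix.mul_sub, Matrix.sub_mul, Matrix.mul_one, Matrix.mul_assoc]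

theorem PosDef.sub_mul_conjTranspose_mul_inv [DecidableEq n] {K : Type*} [Field K]
    [PartialOrder K] [StarRing K] [StarOrderedRing K] {P : Matrix n n K} {R : Matrix m m K}
    (hP : P.PosDef) (hR : R.PosDef) (C : Matrix m n K) :
    (P - P * Cᴴ * (C * P * Cᴴ + R)⁻¹ * C * P).PosDef := by
  have hInfo : (P⁻¹ + Cᴴ * R⁻¹ * C).PosDef :=
    hP.inv.add_posSemidef (hR.inv.posSemidef.conjTranspose_mul_mul_same C)
  have hS : (C * P * Cᴴ + R).PosDef :=
    hR.posSemidef_add (hP.posSemidef.mul_mul_conjTranspose_same C)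
  have hP' : P⁻¹⁻¹ = P := nonsing_inv_nonsing_inv _ ((isUnit_iff_isUnit_det _).mp hP.isUnit)
  have hR' : R⁻¹⁻¹ = R := nonsing_inv_nonsing_inv _ ((isUnit_iff_isUnit_det _).mp hR.isUnit)
  have woodbury := add_mul_mul_inv_eq_sub P⁻¹ Cᴴ R⁻¹ C (isUnit_nonsing_inv_iff.mpr hP.isUnit)
    (isUnit_nonsing_inv_iff.mpr hR.isUnit) (by rw [hP', hR', add_comm]; exact hS.isUnit)
  rw [hP', hR', add_comm R] at woodbury
  exact woodbury ▸ hInfo.inv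

theorem transpose_mul_inv_mul_eq [DecidableEq n] {α : Type*} [CommRing α] {A : Matrix n n α}
    {R : Matrix m m α} (hA : IsUnit A) (hAT : A.IsSymm) (hRT : R.IsSymm) (B : Matrix n m α) :
    (A * B * R⁻¹)ᵀ * A⁻¹ * (A * B * R⁻¹) = R⁻¹ * Bᵀ * A * B * R⁻¹ := by
  rw [transpose_mul, transpose_mul, transpose_nonsing_inv, hAT.eq, hRT.eq]
  simp only [Matrix.mul_assoc, nonsing_inv_mul_cancel_left _ _ ((isUnit_iff_isUnit_det _).mp hA)]

end Matrix

theorem kf_gain_identity (n p : ℕ)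
    (P : Matrix (Fin n) (Fin n) ℝ) (C : Matrix (Fin p) (Fin n) ℝ)
    (R : Matrix (Fin p) (Fin p) ℝ)
    (hP : P.PosDef) (hR : R.PosDef) :
    let K := P * Cᵀ * (C * P * Cᵀ + R)⁻¹
    let Pplus := P - K * C * P
    Kᵀ * Pplus⁻¹ * K = R⁻¹ * C * Pplus * Cᵀ * R⁻¹ := by
  intro K Pplus
  have hCT : Cᴴ = Cᵀ := conjTranspose_eq_transpose_of_trivial C
  have hS : IsUnit (C * P * Cᵀ + R) :=
    hCT ▸ (hR.posSemidef_add (hP.posSemidef.mul_mul_conjTranspose_same C)).isUnit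
  have hK : K = Pplus * Cᵀ * R⁻¹ := mul_mul_inv_add_eq_sub_mul_mul_inv P Cᵀ C hR.isUnit hS
  have hPplus : Pplus.PosDef := by
    have := hP.sub_mul_conjTranspose_mul_inv hR C
    rwa [hCT] at this
  rw [hK, transpose_mul_inv_mul_eq hPplus.isUnit (isHermitian_iff_isSymm.mp hPplus.isHermitian)
    (isHermitian_iff_isSymm.mp hR.isHermitian), transpose_transpose]
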